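/- The robustness of asymmetry is bounded by the group size: for every state ρ on ℂ^d, RoA(ρ) ≤ |G| − 1. -/

import Mathlib

open Matrix ComplexOrder

noncomputable section

/-- A state (density matrix): positive semidefinite with trace 1. -/
def IsState {d : ℕ} (ρ : Matrix (Fin d) (Fin d) ℂ) : Prop :=
  ρ.PosSemidef ∧ ρ.trace = 1

/-- Group average of a matrix under a unitary representation. -/
def grpAvg {d : ℕ} {G : Type*} [Fintype G] [Group G]
    (U : G →* Matrix.unitaryGroup (Fin d) ℂ) (X : Matrix (Fin d) (Fin d) ℂ) :
    Matrix (Fin d) (Fin d) ℂ :=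
  (Fintype.card G : ℂ)⁻¹ •
    ∑ g : G, (U g : Matrix (Fin d) (Fin d) ℂ) * X * ((U g : Matrix (Fin d) (Fin d) ℂ))ᴴ

/-- The robustness of asymmetry. -/
def RoA {d : ℕ} {G : Type*} [Fintype G] [Group G]
    (U : G →* Matrix.unitaryGroup (Fin d) ℂ) (ρ : Matrix (Fin d) (Fin d) ℂ) : ℝ :=
  sInf { s : ℝ | 0 ≤ s ∧ ∃ σ : Matrix (Fin d) (Fin d) ℂ,
    IsState σ ∧ grpAvg U σ = σ ∧ ((1 + s) • σ - ρ).PosSemidef }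

/-! The twirl `σ = E(ρ)` is a symmetric state, and `|G| • σ - ρ = ∑_{g ≠ 1} U_g ρ U_g†` is
positive semidefinite, so `s = |G| - 1` belongs to the set whose infimum is `RoA U ρ`. -/

section grpAvg

variable {d : ℕ} {G : Type*} [Fintype G] [Group G] (U : G →* Matrix.unitaryGroup (Fin d) ℂ)

theorem posSemidef_grpAvg {X : Matrix (Fin d) (Fin d) ℂ} (hX : X.PosSemidef) :
    (grpAvg U X).PosSemidef :=
  (posSemidef_sum _ fun _ _ => hX.mul_mul_conjTranspose_same _).smul
    (inv_nonneg.mpr (Nat.cast_nonneg _))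

theorem trace_grpAvg (X : Matrix (Fin d) (Fin d) ℂ) : (grpAvg U X).trace = X.trace := by
  have htrace_conj (g : G) :
      ((U g : Matrix (Fin d) (Fin d) ℂ) * X * (U g : Matrix _ _ ℂ)ᴴ).trace = X.trace := by
    rw [trace_mul_cycle, ← star_eq_conjTranspose, mem_unitaryGroup_iff'.mp (U g).2, one_mul]
  simp only [grpAvg, trace_smul, trace_sum, htrace_conj, Finset.sum_const, Finset.card_univ,
    nsmul_eq_mul, smul_eq_mul]
  rw [inv_mul_cancel_left₀ (Nat.cast_ne_zero.mpr Fintype.card_ne_zero)]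

theorem isState_grpAvg {ρ : Matrix (Fin d) (Fin d) ℂ} (hρ : IsState ρ) :
    IsState (grpAvg U ρ) :=
  ⟨posSemidef_grpAvg U hρ.1, (trace_grpAvg U ρ).trans hρ.2⟩

theorem mul_grpAvg_mul_conjTranspose (h : G) (X : Matrix (Fin d) (Fin d) ℂ) :
    (U h : Matrix (Fin d) (Fin d) ℂ) * grpAvg U X * (U h : Matrix _ _ ℂ)ᴴ = grpAvg U X := by
  rw [grpAvg, Matrix.mul_smul, Matrix.smul_mul, Finset.mul_sum, Finset.sum_mul]
  congr 1
  refine Fintype.sum_equiv (Equiv.mulLeft h) _ _ fun g => ?_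
  simp only [Equiv.coe_mulLeft, map_mul, Submonoid.coe_mul, conjTranspose_mul, Matrix.mul_assoc]

theorem grpAvg_grpAvg (X : Matrix (Fin d) (Fin d) ℂ) : grpAvg U (grpAvg U X) = grpAvg U X := by
  rw [grpAvg]
  simp only [mul_grpAvg_mul_conjTranspose, Finset.sum_const, Finset.card_univ,
    ← Nat.cast_smul_eq_nsmul ℂ, smul_smul]
  rw [inv_mul_cancel₀ (Nat.cast_ne_zero.mpr Fintype.card_ne_zero), one_smul]

theorem posSemidef_card_smul_grpAvg_sub {X : Matrix (Fin d) (Fin d) ℂ} (hX : X.PosSemidef) :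
    ((Fintype.card G : ℝ) • grpAvg U X - X).PosSemidef := by
  classical
  have hcard_smul : (Fintype.card G : ℝ) • grpAvg U X
      = ∑ g, (U g : Matrix (Fin d) (Fin d) ℂ) * X * (U g : Matrix _ _ ℂ)ᴴ := by
    rw [grpAvg, ← Complex.coe_smul, smul_smul, Complex.ofReal_natCast,
      mul_inv_cancel₀ (Nat.cast_ne_zero.mpr Fintype.card_ne_zero), one_smul]
  rw [hcard_smul, ← Finset.add_sum_erase _ _ (Finset.mem_univ 1)]
  simp only [map_one, OneMemClass.coe_one, Matrix.one_mul, conjTranspose_one, Matrix.mul_one,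
    add_sub_cancel_left]
  exact posSemidef_sum _ fun _ _ => hX.mul_mul_conjTranspose_same _

theorem RoA_le_of_posSemidef {ρ : Matrix (Fin d) (Fin d) ℂ} (σ : Matrix (Fin d) (Fin d) ℂ)
    (hσ : IsState σ) (hσ_sym : grpAvg U σ = σ) {s : ℝ} (hs : 0 ≤ s)
    (hρσ : ((1 + s) • σ - ρ).PosSemidef) : RoA U ρ ≤ s :=
  csInf_le ⟨0, fun _ ht => ht.1⟩ ⟨hs, σ, hσ, hσ_sym, hρσ⟩

end grpAvg

theorem roa_le_card_sub_one_general {d : ℕ} {G : Type*} [Fintype G] [Group G]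
    (U : G →* Matrix.unitaryGroup (Fin d) ℂ)
    (ρ : Matrix (Fin d) (Fin d) ℂ) (hρ : IsState ρ) :
    RoA U ρ ≤ (Fintype.card G : ℝ) - 1 := by
  refine RoA_le_of_posSemidef U (grpAvg U ρ) (isState_grpAvg U hρ) (grpAvg_grpAvg U ρ)
    (sub_nonneg.mpr (Nat.one_le_cast.mpr Fintype.card_pos)) ?_
  rw [add_sub_cancel]
  exact posSemidef_card_smul_grpAvg_sub U hρ.1

theorem roa_le_card_sub_one {d : ℕ} (hd : 1 ≤ d) {G : Type*} [Fintype G] [Group G]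
    (U : G →* Matrix.unitaryGroup (Fin d) ℂ)
    (ρ : Matrix (Fin d) (Fin d) ℂ) (hρ : IsState ρ) :
    RoA U ρ ≤ (Fintype.card G : ℝ) - 1 :=
  roa_le_card_sub_one_general U ρ hρ
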